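/- arXiv:2212.11916 — 2 statements merged into one kernel-verified Lean document; each statement's English description precedes it below -/
import Mathlib

section
/- Let ε > 0, a₁ ∈ C¹([0,1]) with a₁(x) ≥ α > 0, and let u₁ ∈ C²([0,1]) solve -ε u₁'' - (a₁ u₁)' = f₁' on (0,1) with u₁(0) = u₁(1) = 0, where f₁ ∈ C¹([0,1]). Then ‖u₁‖_{L∞(0,1)} ≤ C‖f₁‖_{L∞(0,1)} with C depending only on α (not on ε). -/
/-!
Integrating the equation once, the flux `ε u' + a u + f` is a constant `c` on `(0,1)`.
At a positive interior maximum `u' = 0`, so `α u ≤ a u = c - f ≤ c + M`; if instead `u ≤ 0`,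
then `u` cannot decrease into its boundary value `u 1 = 0`, so `u' ≥ 0` at points arbitrarily
close to `1`, where `a u` is close to `0`, and again `0 ≤ c + M`. Hence `α u ≤ c + M`, and the
same argument for `-u` gives `-α u ≤ -c + M`. Evaluating both at `x = 0` yields `|c| ≤ M`, and
therefore `|u| ≤ 2M / α`, uniformly in `ε`.
-/

open Set Filter Topology

noncomputable def flux (ε : ℝ) (a u f : ℝ → ℝ) (x : ℝ) : ℝ :=
  ε * deriv u x + a x * u x + f x

section Flux

variable {ε α M c p q : ℝ} {a u f : ℝ → ℝ}

theorem flux_neg : flux ε a (-u) (-f) = -flux ε a u f := by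
  ext x
  simp only [flux, deriv.neg', Pi.neg_apply]
  ring

theorem flux_eq_of_ode (ha : DifferentiableOn ℝ a (Ioo p q))
    (hu : DifferentiableOn ℝ u (Ioo p q)) (hu' : DifferentiableOn ℝ (deriv u) (Ioo p q))
    (hf : DifferentiableOn ℝ f (Ioo p q))
    (hode : ∀ x ∈ Ioo p q, -ε * deriv (deriv u) x - deriv (fun y => a y * u y) x = deriv f x)
    {x y : ℝ} (hx : x ∈ Ioo p q) (hy : y ∈ Ioo p q) :
    flux ε a u f x = flux ε a u f y := by
  have hasDeriv : ∀ z ∈ Ioo p q, HasDerivAt (flux ε a u f) 0 z := by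
    intro z hz
    have hnhds := isOpen_Ioo.mem_nhds hz
    have hau : HasDerivAt (fun y => a y * u y) (deriv (fun y => a y * u y) z) z :=
      (((ha z hz).differentiableAt hnhds).mul ((hu z hz).differentiableAt hnhds)).hasDerivAt
    have h := ((((hu' z hz).differentiableAt hnhds).hasDerivAt.const_mul ε).add hau).add
      ((hf z hz).differentiableAt hnhds).hasDerivAt
    exact h.congr_deriv (by linarith [hode z hz])
  exact isOpen_Ioo.is_const_of_deriv_eq_zero isPreconnected_Ioo
    (fun z hz => (hasDeriv z hz).differentiableAt.differentiableWithinAt)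
    (fun z hz => (hasDeriv z hz).deriv) hx hy

theorem mul_le_flux_add_of_isLocalMax {x : ℝ} (hmax : IsLocalMax u x) (hux : 0 ≤ u x)
    (hα : α ≤ a x) (hf : -M ≤ f x) : α * u x ≤ flux ε a u f x + M := by
  have hau := mul_le_mul_of_nonneg_right hα hux
  simp only [flux, hmax.deriv_eq_zero]
  linarith

theorem frequently_deriv_nonneg_nhdsLT (hpq : p < q) (hc : ContinuousOn u (Icc p q))
    (hd : DifferentiableOn ℝ u (Ioo p q)) (hle : ∀ x ∈ Icc p q, u x ≤ u q) :
    ∃ᶠ x in 𝓝[<] q, x ∈ Ioo p q ∧ 0 ≤ deriv u x := by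
  refine frequently_iff.2 fun {U} hU => ?_
  obtain ⟨l, hlq, hlU⟩ := mem_nhdsLT_iff_exists_Ioo_subset.1 hU
  set t := max l p
  have htq : t < q := max_lt hlq hpq
  have hpt : p ≤ t := le_max_right l p
  obtain ⟨ξ, hξ, hslope⟩ := exists_deriv_eq_slope u htq
    (hc.mono (Icc_subset_Icc_left hpt)) (hd.mono (Ioo_subset_Ioo_left hpt))
  refine ⟨ξ, hlU ⟨(le_max_left l p).trans_lt hξ.1, hξ.2⟩,
    ⟨hpt.trans_lt hξ.1, hξ.2⟩, ?_⟩
  rw [hslope]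
  exact div_nonneg (sub_nonneg.2 (hle t ⟨hpt, htq.le⟩)) (sub_nonneg.2 htq.le)

theorem neg_le_of_flux_eq_of_nonpos (hpq : p < q) (hε : 0 ≤ ε) (ha : ContinuousOn a (Icc p q))
    (huc : ContinuousOn u (Icc p q)) (hud : DifferentiableOn ℝ u (Ioo p q))
    (hc : ∀ x ∈ Ioo p q, flux ε a u f x = c) (hf : ∀ x ∈ Ioo p q, -M ≤ f x)
    (hu : ∀ x ∈ Icc p q, u x ≤ 0) (huq : u q = 0) : -M ≤ c := by
  by_contra! hlt
  have hlim : Tendsto (fun x => a x * u x) (𝓝[<] q) (𝓝 0) := by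
    have h := (((ha.mul huc) q (right_mem_Icc.2 hpq.le)).mono Ioo_subset_Icc_self).tendsto
    rw [nhdsWithin_Ioo_eq_nhdsLT hpq, Pi.mul_apply, huq, mul_zero] at h
    exact h
  have hnear : ∀ᶠ x in 𝓝[<] q, c + M < a x * u x :=
    hlim.eventually (lt_mem_nhds (by linarith))
  obtain ⟨x, hax, hx, hdx⟩ := (hnear.and_frequently
    (frequently_deriv_nonneg_nhdsLT hpq huc hud fun x hx => huq ▸ hu x hx)).exists
  have hflux := hc x hx
  simp only [flux] at hflux
  linarith [mul_nonneg hε hdx, hf x hx]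

theorem mul_le_add_of_flux_eq (hα : 0 ≤ α) (hpq : p < q) (hε : 0 ≤ ε)
    (ha : ContinuousOn a (Icc p q)) (huc : ContinuousOn u (Icc p q))
    (hud : DifferentiableOn ℝ u (Ioo p q)) (haα : ∀ x ∈ Ioo p q, α ≤ a x)
    (hc : ∀ x ∈ Ioo p q, flux ε a u f x = c) (hf : ∀ x ∈ Ioo p q, -M ≤ f x)
    (hup : u p = 0) (huq : u q = 0) : ∀ x ∈ Icc p q, α * u x ≤ c + M := by
  obtain ⟨xm, hxm, hmax⟩ :=
    isCompact_Icc.exists_isMaxOn (nonempty_Icc.2 hpq.le) huc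
  intro x hx
  have hux : α * u x ≤ α * u xm := mul_le_mul_of_nonneg_left (hmax hx) hα
  rcases le_or_gt (u xm) 0 with hneg | hpos
  · have hM := neg_le_of_flux_eq_of_nonpos hpq hε ha huc hud hc hf
      (fun y hy => (hmax hy).trans hneg) huq
    linarith [mul_nonpos_of_nonneg_of_nonpos hα hneg]
  · have hxm' : xm ∈ Ioo p q :=
      ⟨hxm.1.lt_of_ne (by rintro rfl; simp [hup] at hpos),
        hxm.2.lt_of_ne (by rintro rfl; simp [huq] at hpos)⟩
    have hloc : IsLocalMax u xm :=
      hmax.isLocalMax (mem_of_superset (isOpen_Ioo.mem_nhds hxm') Ioo_subset_Icc_self)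
    have := mul_le_flux_add_of_isLocalMax (ε := ε) hloc hpos.le (haα xm hxm') (hf xm hxm')
    rw [hc xm hxm'] at this
    linarith

end Flux

theorem stmt_9 (α : ℝ) (hα : 0 < α) :
    ∃ C : ℝ, 0 < C ∧
      ∀ (ε : ℝ) (a u f : ℝ → ℝ), 0 < ε →
        ContDiffOn ℝ 1 a (Set.Icc 0 1) →
        (∀ x ∈ Set.Icc (0 : ℝ) 1, α ≤ a x) →
        ContDiffOn ℝ 2 u (Set.Icc 0 1) →
        ContDiffOn ℝ 1 f (Set.Icc 0 1) →
        (∀ x ∈ Set.Ioo (0 : ℝ) 1,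
          -ε * deriv (deriv u) x - deriv (fun y => a y * u y) x = deriv f x) →
        u 0 = 0 → u 1 = 0 →
        ∀ M : ℝ, (∀ y ∈ Set.Icc (0 : ℝ) 1, |f y| ≤ M) →
          ∀ x ∈ Set.Icc (0 : ℝ) 1, |u x| ≤ C * M := by
  refine ⟨2 / α, by positivity, ?_⟩
  intro ε a u f hε ha haα hu hf hode hu0 hu1 M hM x hx
  have hsub : Ioo (0 : ℝ) 1 ⊆ Icc 0 1 := Ioo_subset_Icc_self
  have hud : DifferentiableOn ℝ u (Ioo 0 1) := (hu.differentiableOn two_ne_zero).mono hsub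
  have hu'd : DifferentiableOn ℝ (deriv u) (Ioo 0 1) :=
    ((hu.mono hsub).deriv_of_isOpen isOpen_Ioo (by norm_num)).differentiableOn one_ne_zero
  set c := flux ε a u f (1 / 2)
  have hc : ∀ y ∈ Ioo (0 : ℝ) 1, flux ε a u f y = c := fun y hy =>
    flux_eq_of_ode ((ha.differentiableOn one_ne_zero).mono hsub) hud hu'd
      ((hf.differentiableOn one_ne_zero).mono hsub) hode hy (by norm_num)
  have hc' : ∀ y ∈ Ioo (0 : ℝ) 1, flux ε a (-u) (-f) y = -c := fun y hy => by
    rw [flux_neg, Pi.neg_apply, hc y hy]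
  have haα' : ∀ y ∈ Ioo (0 : ℝ) 1, α ≤ a y := fun y hy => haα y (hsub hy)
  have hup := mul_le_add_of_flux_eq hα.le zero_lt_one hε.le ha.continuousOn hu.continuousOn
    hud haα' hc (fun y hy => neg_le_of_abs_le (hM y (hsub hy))) hu0 hu1
  have hlow := mul_le_add_of_flux_eq hα.le zero_lt_one hε.le ha.continuousOn
    hu.continuousOn.neg hud.neg haα' hc' (fun y hy => neg_le_neg (le_of_abs_le (hM y (hsub hy))))
    (by simp [hu0]) (by simp [hu1])
  have h0 : (0 : ℝ) ∈ Icc 0 1 := left_mem_Icc.2 zero_le_one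
  have hc_lower : 0 ≤ c + M := by simpa [hu0] using hup 0 h0
  have hc_upper : 0 ≤ -c + M := by simpa [hu0] using hlow 0 h0
  have hux := hup x hx
  have hnegux := hlow x hx
  simp only [Pi.neg_apply] at hnegux
  rw [div_mul_eq_mul_div, le_div_iff₀ hα, mul_comm]
  rcases abs_cases (u x) with ⟨habs, -⟩ | ⟨habs, -⟩ <;> rw [habs] <;> linarith
end

section
/- Let ε > 0, b₂ ∈ C([0,1]) with b₂(x) ≥ β > 0, and let u₂ ∈ C²([0,1]) solve -ε u₂'' + b₂ u₂ = f₂' on (0,1) with u₂(0) = u₂(1) = 0, where f₂ ∈ C¹([0,1]). Then ‖u₂‖_{L∞(0,1)} ≤ C·ε^{-1/2}·‖f₂‖_{L∞(0,1)} with C depending only on β. -/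
/-!
The flux `w = ε u' + f` satisfies `w' = b u`. At a positive interior maximum `x₀` of `u`, with
value `m`, let `a` be the last point before `x₀` where `u = m / 2`. On `[a, x₀]` the flux grows at
rate at least `β m / 2`, while `u' x₀ = 0` and `u' a ≥ 0`; comparing values of `w` and using
`|f| ≤ M` gives `ε u' ≤ 2 M` on `[a, x₀]` and `β (m / 2) (x₀ - a) ≤ 2 M`. Integrating the first,
`m / 2 ≤ (2 M / ε) (x₀ - a)`, and multiplying the two bounds eliminates the length `x₀ - a`,
leaving `β ε m² ≤ 16 M²`. A negative minimum is handled by passing to `-u`, `-f`.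
-/

open Set

theorem exists_last_eq_of_lt {g : ℝ → ℝ} {p q c : ℝ} (hpq : p ≤ q)
    (hg : ContinuousOn g (Icc p q)) (hp : g p ≤ c) (hq : c < g q) :
    ∃ a ∈ Ico p q, g a = c ∧ ∀ x ∈ Icc a q, c ≤ g x := by
  have hclosed : IsClosed (Icc p q ∩ g ⁻¹' {c}) :=
    hg.preimage_isClosed_of_isClosed isClosed_Icc isClosed_singleton
  have hne : (Icc p q ∩ g ⁻¹' {c}).Nonempty := intermediate_value_Icc hpq hg ⟨hp, hq.le⟩
  obtain ⟨a, ⟨haI, hga⟩, hlast⟩ :=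
    (isCompact_Icc.of_isClosed_subset hclosed inter_subset_left).exists_isGreatest hne
  refine ⟨a, ⟨haI.1, haI.2.lt_of_ne ?_⟩, hga, fun x hx => ?_⟩
  · rintro rfl
    exact hq.ne' hga
  by_contra! hlt
  obtain ⟨y, hy, hgy⟩ := intermediate_value_Icc hx.2
    (hg.mono (Icc_subset_Icc (haI.1.trans hx.1) le_rfl)) ⟨hlt.le, hq.le⟩
  have hya : y ≤ a := hlast ⟨⟨haI.1.trans (hx.1.trans hy.1), hy.2⟩, hgy⟩
  have hxa : x = a := le_antisymm (hy.1.trans hya) hx.1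
  exact hlt.ne (hxa ▸ hga)

theorem HasDerivAt.nonneg_of_isMinOn_Icc {g : ℝ → ℝ} {g' a q : ℝ} (hg : HasDerivAt g g' a)
    (haq : a < q) (hmin : IsMinOn g (Icc a q) a) : 0 ≤ g' := by
  have hcone : q - a ∈ posTangentConeAt (Icc a q) a :=
    sub_mem_posTangentConeAt_of_segment_subset (segment_eq_Icc haq.le).subset
  have := hmin.localize.hasFDerivWithinAt_nonneg
    hg.hasDerivWithinAt.hasFDerivWithinAt hcone
  rw [ContinuousLinearMap.toSpanSingleton_apply, smul_eq_mul] at this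
  exact nonneg_of_mul_nonneg_right this (sub_pos.2 haq)

theorem mul_sub_le_sub_of_le_hasDerivAt {g g' : ℝ → ℝ} {a b C : ℝ}
    (hg : ∀ x ∈ Icc a b, HasDerivAt g (g' x) x) (hC : ∀ x ∈ Icc a b, C ≤ g' x)
    {x y : ℝ} (hx : x ∈ Icc a b) (hy : y ∈ Icc a b) (hxy : x ≤ y) :
    C * (y - x) ≤ g y - g x := by
  refine (convex_Icc a b).mul_sub_le_image_sub_of_le_deriv
    (fun z hz => (hg z hz).continuousAt.continuousWithinAt)
    (fun z hz => (hg z (interior_subset hz)).differentiableAt.differentiableWithinAt)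
    (fun z hz => ?_) x hx y hy hxy
  rw [(hg z (interior_subset hz)).deriv]
  exact hC z (interior_subset hz)

theorem sub_le_mul_sub_of_hasDerivAt_le {g g' : ℝ → ℝ} {a b C : ℝ}
    (hg : ∀ x ∈ Icc a b, HasDerivAt g (g' x) x) (hC : ∀ x ∈ Icc a b, g' x ≤ C)
    {x y : ℝ} (hx : x ∈ Icc a b) (hy : y ∈ Icc a b) (hxy : x ≤ y) :
    g y - g x ≤ C * (y - x) := by
  have := mul_sub_le_sub_of_le_hasDerivAt (fun z hz => (hg z hz).neg) (C := -C)
    (fun z hz => neg_le_neg (hC z hz)) hx hy hxy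
  simp only [Pi.neg_apply] at this
  linarith

theorem le_of_mul_sq_le {β ε m M : ℝ} (hβ : 0 < β) (hε : 0 < ε) (hM : 0 ≤ M)
    (h : β * ε * m ^ 2 ≤ 16 * M ^ 2) : m ≤ 4 / √β * (1 / √ε) * M := by
  have hsq : (m * (√β * √ε)) ^ 2 ≤ (4 * M) ^ 2 := by
    rw [mul_pow, mul_pow, Real.sq_sqrt hβ.le, Real.sq_sqrt hε.le]
    linarith
  have := le_abs_self _ |>.trans (abs_le_of_sq_le_sq hsq (by positivity))
  rw [← le_div_iff₀ (by positivity)] at this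
  calc m ≤ 4 * M / (√β * √ε) := this
    _ = 4 / √β * (1 / √ε) * M := by field_simp

theorem hasDerivAt_flux {ε : ℝ} {b u f : ℝ → ℝ} {s : Set ℝ} (hs : IsOpen s)
    (hu : ContDiffOn ℝ 2 u s) (hf : ContDiffOn ℝ 1 f s)
    (heq : ∀ x ∈ s, -ε * deriv (deriv u) x + b x * u x = deriv f x) {x : ℝ} (hx : x ∈ s) :
    HasDerivAt (fun y => ε * deriv u y + f y) (b x * u x) x := by
  have hu'' : HasDerivAt (deriv u) (deriv (deriv u) x) x :=
    (((hu.deriv_of_isOpen hs (m := 1) (by norm_num)).differentiableOn one_ne_zero x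
      hx).differentiableAt (hs.mem_nhds hx)).hasDerivAt
  have hf' : HasDerivAt f (deriv f x) x :=
    ((hf.differentiableOn one_ne_zero x hx).differentiableAt (hs.mem_nhds hx)).hasDerivAt
  exact ((hu''.const_mul ε).fun_add hf').congr_deriv (by linarith [heq x hx])

theorem mul_sq_le_of_flux {ε β m M a x₀ : ℝ} {u u' b f : ℝ → ℝ} (hε : 0 < ε) (hβ : 0 ≤ β)
    (hm : 0 ≤ m) (hax : a < x₀) (hu : ∀ x ∈ Icc a x₀, HasDerivAt u (u' x) x)
    (hflux : ∀ x ∈ Icc a x₀, HasDerivAt (fun y => ε * u' y + f y) (b x * u x) x)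
    (hb : ∀ x ∈ Icc a x₀, β ≤ b x) (hlow : ∀ x ∈ Icc a x₀, m / 2 ≤ u x)
    (hf : ∀ x ∈ Icc a x₀, |f x| ≤ M) (hua : u a ≤ m / 2) (hux₀ : u x₀ = m)
    (hu'a : 0 ≤ u' a) (hu'x₀ : u' x₀ = 0) :
    β * ε * m ^ 2 ≤ 16 * M ^ 2 := by
  have ha : a ∈ Icc a x₀ := ⟨le_rfl, hax.le⟩
  have hx₀ : x₀ ∈ Icc a x₀ := ⟨hax.le, le_rfl⟩
  have hfx₀ := abs_le.1 (hf x₀ hx₀)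
  have hflux_growth : ∀ x ∈ Icc a x₀,
      β * (m / 2) * (x₀ - x) ≤ ε * u' x₀ + f x₀ - (ε * u' x + f x) :=
    fun x hx => mul_sub_le_sub_of_le_hasDerivAt hflux
      (fun y hy => mul_le_mul (hb y hy) (hlow y hy) (by positivity) (hβ.trans (hb y hy)))
      hx hx₀ hx.2
  have hslope : ∀ x ∈ Icc a x₀, u' x ≤ 2 * M / ε := by
    intro x hx
    have := hflux_growth x hx
    have := abs_le.1 (hf x hx)
    rw [le_div_iff₀ hε]
    nlinarith [mul_nonneg (mul_nonneg hβ hm) (sub_nonneg.2 hx.2)]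
  have hrise : m / 2 ≤ 2 * M / ε * (x₀ - a) := by
    have := sub_le_mul_sub_of_hasDerivAt_le hu hslope ha hx₀ hax.le
    linarith
  have hwidth : β * (m / 2) * (x₀ - a) ≤ 2 * M := by
    have := hflux_growth a ha
    have := abs_le.1 (hf a ha)
    nlinarith [mul_nonneg hε.le hu'a]
  rw [div_mul_eq_mul_div, le_div_iff₀ hε] at hrise
  have hM : 0 ≤ M := (abs_nonneg _).trans (hf a ha)
  nlinarith [mul_le_mul_of_nonneg_left hwidth (by positivity : 0 ≤ m / 2 * ε), sub_pos.2 hax]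

theorem mul_sq_le_of_isMaxOn {ε β M p q x₀ : ℝ} {u u' b f : ℝ → ℝ} (hε : 0 < ε) (hβ : 0 ≤ β)
    (hu : ContinuousOn u (Icc p q)) (hu' : ∀ x ∈ Ioo p q, HasDerivAt u (u' x) x)
    (hflux : ∀ x ∈ Ioo p q, HasDerivAt (fun y => ε * u' y + f y) (b x * u x) x)
    (hb : ∀ x ∈ Icc p q, β ≤ b x) (hf : ∀ x ∈ Icc p q, |f x| ≤ M)
    (hp : u p = 0) (hq : u q = 0) (hx₀ : x₀ ∈ Icc p q) (hmax : IsMaxOn u (Icc p q) x₀) :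
    β * ε * u x₀ ^ 2 ≤ 16 * M ^ 2 := by
  have hpq : p ≤ q := hx₀.1.trans hx₀.2
  have hm : 0 ≤ u x₀ := hp ▸ hmax ⟨le_rfl, hpq⟩
  rcases hm.eq_or_lt with hm0 | hmpos
  · rw [← hm0, zero_pow two_ne_zero, mul_zero]
    positivity
  have hx₀I : x₀ ∈ Ioo p q :=
    ⟨hx₀.1.lt_of_ne (by rintro rfl; linarith), hx₀.2.lt_of_ne (by rintro rfl; linarith)⟩
  obtain ⟨a, ha, hua, hlow⟩ := exists_last_eq_of_lt hx₀.1
    (hu.mono (Icc_subset_Icc le_rfl hx₀.2)) (by linarith) (half_lt_self hmpos)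
  have hpa : p < a := ha.1.lt_of_ne (by rintro rfl; linarith)
  have hsub : Icc a x₀ ⊆ Ioo p q := fun x hx => ⟨hpa.trans_le hx.1, hx.2.trans_lt hx₀I.2⟩
  have hu'x₀ : u' x₀ = 0 :=
    (hmax.isLocalMax (Icc_mem_nhds hx₀I.1 hx₀I.2)).hasDerivAt_eq_zero (hu' x₀ hx₀I)
  have hu'a : 0 ≤ u' a :=
    (hu' a (hsub ⟨le_rfl, ha.2.le⟩)).nonneg_of_isMinOn_Icc ha.2 fun x hx => by
      simpa [hua] using hlow x hx
  exact mul_sq_le_of_flux hε hβ hm ha.2 (fun x hx => hu' x (hsub hx))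
    (fun x hx => hflux x (hsub hx)) (fun x hx => hb x (Ioo_subset_Icc_self (hsub hx)))
    hlow (fun x hx => hf x (Ioo_subset_Icc_self (hsub hx))) hua.le rfl hu'a hu'x₀

theorem abs_le_of_flux {ε β M p q : ℝ} {u u' b f : ℝ → ℝ} (hε : 0 < ε) (hβ : 0 < β)
    (hu : ContinuousOn u (Icc p q)) (hu' : ∀ x ∈ Ioo p q, HasDerivAt u (u' x) x)
    (hflux : ∀ x ∈ Ioo p q, HasDerivAt (fun y => ε * u' y + f y) (b x * u x) x)
    (hb : ∀ x ∈ Icc p q, β ≤ b x) (hf : ∀ x ∈ Icc p q, |f x| ≤ M)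
    (hp : u p = 0) (hq : u q = 0) {x : ℝ} (hx : x ∈ Icc p q) :
    |u x| ≤ 4 / √β * (1 / √ε) * M := by
  have hne : (Icc p q).Nonempty := ⟨x, hx⟩
  have hM : 0 ≤ M := (abs_nonneg _).trans (hf x hx)
  obtain ⟨x₁, hx₁, hmax⟩ := isCompact_Icc.exists_isMaxOn hne hu
  obtain ⟨x₂, hx₂, hmin⟩ := isCompact_Icc.exists_isMaxOn hne hu.neg
  have hflux_neg : ∀ x ∈ Ioo p q,
      HasDerivAt (fun y => ε * (-u') y + (-f) y) (b x * (-u) x) x := fun x hx => by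
    have hneg : (fun y => ε * (-u') y + (-f) y) = fun y => -(ε * u' y + f y) := by
      funext y
      simp only [Pi.neg_apply]
      ring
    rw [hneg]
    exact (hflux x hx).fun_neg.congr_deriv (by simp only [Pi.neg_apply]; ring)
  have hupper := mul_sq_le_of_isMaxOn hε hβ.le hu hu' hflux hb hf hp hq hx₁ hmax
  have hlower := mul_sq_le_of_isMaxOn hε hβ.le hu.neg (fun x hx => (hu' x hx).neg) hflux_neg hb
    (fun x hx => by simpa using hf x hx) (by simp [hp]) (by simp [hq]) hx₂ hmin
  rw [abs_le]
  constructor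
  · have hux : -u x ≤ -u x₂ := hmin hx
    have hux₂ : -u x₂ ≤ _ := le_of_mul_sq_le hβ hε hM hlower
    linarith
  · have hux : u x ≤ u x₁ := hmax hx
    linarith [le_of_mul_sq_le hβ hε hM hupper]

theorem stmt_10 (β : ℝ) (hβ : 0 < β) :
    ∃ C : ℝ, 0 < C ∧
      ∀ (ε : ℝ) (b u f : ℝ → ℝ), 0 < ε →
        ContinuousOn b (Set.Icc 0 1) →
        (∀ x ∈ Set.Icc (0 : ℝ) 1, β ≤ b x) →
        ContDiffOn ℝ 2 u (Set.Icc 0 1) →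
        ContDiffOn ℝ 1 f (Set.Icc 0 1) →
        (∀ x ∈ Set.Ioo (0 : ℝ) 1,
          -ε * deriv (deriv u) x + b x * u x = deriv f x) →
        u 0 = 0 → u 1 = 0 →
        ∀ M : ℝ, (∀ y ∈ Set.Icc (0 : ℝ) 1, |f y| ≤ M) →
          ∀ x ∈ Set.Icc (0 : ℝ) 1, |u x| ≤ C * (1 / Real.sqrt ε) * M := by
  refine ⟨4 / √β, by positivity, ?_⟩
  intro ε b u f hε _ hb hu hf heq h0 h1 M hM x hx
  have hu' : ∀ x ∈ Ioo (0 : ℝ) 1, HasDerivAt u (deriv u x) x := fun x hx =>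
    ((hu.differentiableOn (by norm_num) x (Ioo_subset_Icc_self hx)).differentiableAt
      (Icc_mem_nhds hx.1 hx.2)).hasDerivAt
  have hflux : ∀ x ∈ Ioo (0 : ℝ) 1,
      HasDerivAt (fun y => ε * deriv u y + f y) (b x * u x) x := fun x hx =>
    hasDerivAt_flux isOpen_Ioo (hu.mono Ioo_subset_Icc_self) (hf.mono Ioo_subset_Icc_self) heq hx
  exact abs_le_of_flux hε hβ hu.continuousOn hu' hflux hb hM h0 h1 hx
end
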